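/- Let Ω ⊂ ℝ^n be a bounded domain star shaped with respect to a ball B containing the support of θ ∈ C_0^∞(ℝ^n), and let k ∈ ℕ with k ≤ n/2. Then for every q > n/k the operator P_θ^{k,L} f(x) = ∫_0^{1/2} s^{k-1}(1-s)^{-n} ∫ θ(x + (y-x)/(1-s)) f(y) dy ds satisfies ‖P_θ^{k,L} f‖_{L^2(Ω)} ≤ ((2^{n-k}/k) |Ω| ‖θ‖_{L^∞})^β ((2^{n/q-k}/(k - n/q)) ‖θ‖_{L^1})^{1-β} ‖f‖_{L^2(Ω)} with β = (q-2)/(2(q-1)). -/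

import Mathlib

open MeasureTheory Real Set Filter Metric Bornology
open scoped ENNReal Topology

noncomputable section

/-- `Ω` is star shaped with respect to `B`. -/
def StarShapedWRT {n : ℕ} (Ω B : Set (Fin n → ℝ)) : Prop :=
  ∀ y ∈ Ω, convexHull ℝ (B ∪ {y}) ⊆ Ω

/-- `P_θ^{k,L} f(x) = ∫_0^{1/2} s^{k-1}(1-s)^{-n} ∫ θ(x+(y-x)/(1-s)) f(y) dy ds`. -/
def PthetaL {n : ℕ} (k : ℕ) (θ f : (Fin n → ℝ) → ℝ) : (Fin n → ℝ) → ℝ :=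
  fun x => ∫ s in Ioo (0 : ℝ) (1 / 2),
    (s ^ (k - 1) / (1 - s) ^ n) * ∫ y, θ (x + (1 - s)⁻¹ • (y - x)) * f y

/-! ### Auxiliary lemmas -/

lemma lintegral_comp_affine {n : ℕ} {α : ℝ} (hα : α ≠ 0) (w : Fin n → ℝ)
    {h : (Fin n → ℝ) → ℝ≥0∞} (hh : Measurable h) :
    ∫⁻ x, h (α • x + w) = ENNReal.ofReal |(α ^ n)⁻¹| * ∫⁻ z, h z := by
  have h2 : Measurable fun z : Fin n → ℝ => h (z + w) := hh.comp (measurable_add_const w)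
  have h3 : ∫⁻ x, h (α • x + w) = ∫⁻ z, h (z + w) ∂(Measure.map (α • ·) volume) := by
    rw [lintegral_map h2 (measurable_const_smul α)]
  rw [h3, Measure.map_addHaar_smul volume hα, lintegral_smul_measure]
  have h4 : ∫⁻ z, h (z + w) = ∫⁻ z, h z := by
    conv_rhs => rw [← map_add_right_eq_self volume w, lintegral_map hh (measurable_add_const w)]
  rw [h4, Module.finrank_fin_fun, smul_eq_mul]

lemma affine_preimage_null {n : ℕ} {α : ℝ} (hα : α ≠ 0) (w : Fin n → ℝ)
    {S : Set (Fin n → ℝ)} (hS : MeasurableSet S) (h0 : volume S = 0) :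
    volume ((fun x => α • x + w) ⁻¹' S) = 0 := by
  have hmeas : MeasurableSet ((fun x : Fin n → ℝ => α • x + w) ⁻¹' S) :=
    ((measurable_const_smul α).add_const w) hS
  have h1 : volume ((fun x : Fin n → ℝ => α • x + w) ⁻¹' S)
      = ∫⁻ x, S.indicator (1 : (Fin n → ℝ) → ℝ≥0∞) (α • x + w) := by
    rw [← lintegral_indicator_one hmeas]
    refine lintegral_congr fun x => ?_
    by_cases h : α • x + w ∈ S <;> simp [h, Set.indicator]
  rw [h1, lintegral_comp_affine hα w (measurable_one.indicator hS)]
  rw [lintegral_indicator_one hS, h0, mul_zero]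

lemma hoelder_param {α : Type*} [MeasurableSpace α] (μ : Measure α) {β : ℝ}
    (hβ0 : 0 < β) (hβ1 : β < 1) {f g : α → ℝ≥0∞}
    (hf : AEMeasurable f μ) (hg : AEMeasurable g μ) :
    ∫⁻ a, f a ^ β * g a ^ (1 - β) ∂μ
      ≤ (∫⁻ a, f a ∂μ) ^ β * (∫⁻ a, g a ∂μ) ^ (1 - β) := by
  have hβ1' : 0 < 1 - β := by linarith
  have hconj : (1/β).HolderConjugate (1/(1-β)) := by
    rw [Real.holderConjugate_iff]; constructor
    · rw [lt_div_iff₀ hβ0]; linarith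
    · rw [one_div, one_div, inv_inv, inv_inv]; ring
  have H := ENNReal.lintegral_mul_le_Lp_mul_Lq μ hconj
    (hf.pow_const β) (hg.pow_const (1 - β))
  simp only [Pi.mul_apply] at H
  calc ∫⁻ a, f a ^ β * g a ^ (1 - β) ∂μ
      ≤ (∫⁻ a, (f a ^ β) ^ (1/β) ∂μ) ^ (1/(1/β)) *
        (∫⁻ a, (g a ^ (1-β)) ^ (1/(1-β)) ∂μ) ^ (1/(1/(1-β))) := H
    _ = (∫⁻ a, f a ∂μ) ^ β * (∫⁻ a, g a ∂μ) ^ (1 - β) := by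
        rw [one_div_one_div, one_div_one_div]
        congr 1
        · congr 1; refine lintegral_congr fun a => ?_
          rw [← ENNReal.rpow_mul, mul_one_div, div_self hβ0.ne', ENNReal.rpow_one]
        · congr 1; refine lintegral_congr fun a => ?_
          rw [← ENNReal.rpow_mul, mul_one_div, div_self hβ1'.ne', ENNReal.rpow_one]

lemma minkowski_two {α γ : Type*} [MeasurableSpace α] [MeasurableSpace γ]
    (μ : Measure α) (ν : Measure γ) [SFinite μ] [SFinite ν]
    {F : γ → α → ℝ≥0∞} (hF : Measurable (Function.uncurry F)) :
    (∫⁻ x, (∫⁻ s, F s x ∂ν) ^ (2:ℝ) ∂μ) ^ ((1:ℝ)/2)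
      ≤ ∫⁻ s, (∫⁻ x, (F s x) ^ (2:ℝ) ∂μ) ^ ((1:ℝ)/2) ∂ν := by
  set N : γ → ℝ≥0∞ := fun s => (∫⁻ x, (F s x) ^ (2:ℝ) ∂μ) ^ ((1:ℝ)/2) with hN
  have hFx : ∀ x, Measurable fun s => F s x := fun x =>
    hF.comp (measurable_prodMk_right (α := γ))
  have hFs : ∀ s, Measurable fun x => F s x := fun s =>
    hF.comp (measurable_prodMk_left)
  have key : ∫⁻ x, (∫⁻ s, F s x ∂ν) ^ (2:ℝ) ∂μ ≤ (∫⁻ s, N s ∂ν) ^ (2:ℝ) := by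
    have e1 : ∀ x, (∫⁻ s, F s x ∂ν) ^ (2:ℝ)
        = ∫⁻ s, ∫⁻ t, F s x * F t x ∂ν ∂ν := by
      intro x
      rw [show ((2:ℝ)) = ((2:ℕ):ℝ) by norm_num, ENNReal.rpow_natCast, sq]
      rw [← lintegral_mul_const _ (hFx x)]
      refine lintegral_congr fun s => ?_
      rw [← lintegral_const_mul _ (hFx x)]
    calc ∫⁻ x, (∫⁻ s, F s x ∂ν) ^ (2:ℝ) ∂μ
        = ∫⁻ x, ∫⁻ s, ∫⁻ t, F s x * F t x ∂ν ∂ν ∂μ := lintegral_congr e1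
      _ = ∫⁻ s, ∫⁻ x, ∫⁻ t, F s x * F t x ∂ν ∂μ ∂ν := by
          refine lintegral_lintegral_swap ?_
          apply Measurable.aemeasurable
          show Measurable fun p : α × γ => ∫⁻ t, F p.2 p.1 * F t p.1 ∂ν
          exact Measurable.lintegral_prod_right'
            (f := fun p : (α × γ) × γ => F p.1.2 p.1.1 * F p.2 p.1.1)
            ((hF.comp ((measurable_fst.snd).prodMk measurable_fst.fst)).mul
              (hF.comp (measurable_snd.prodMk measurable_fst.fst)))
      _ = ∫⁻ s, ∫⁻ t, ∫⁻ x, F s x * F t x ∂μ ∂ν ∂ν := by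
          refine lintegral_congr fun s => ?_
          refine lintegral_lintegral_swap ?_
          apply Measurable.aemeasurable
          exact ((hFs s).comp measurable_fst).mul
            (hF.comp (measurable_snd.prodMk measurable_fst))
      _ ≤ ∫⁻ s, ∫⁻ t, N s * N t ∂ν ∂ν := by
          refine lintegral_mono fun s => lintegral_mono fun t => ?_
          have h22 : (2:ℝ).HolderConjugate 2 := by rw [Real.holderConjugate_iff]; norm_num
          have H := ENNReal.lintegral_mul_le_Lp_mul_Lq μ h22
            (hFs s).aemeasurable (hFs t).aemeasurable
          simp only [Pi.mul_apply] at H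
          exact H
      _ = (∫⁻ s, N s ∂ν) ^ (2:ℝ) := by
          rw [show ((2:ℝ)) = ((2:ℕ):ℝ) by norm_num, ENNReal.rpow_natCast, sq]
          have hNm : Measurable N := by
            apply Measurable.pow_const
            exact Measurable.lintegral_prod_right' (hF.pow_const _)
          rw [← lintegral_mul_const _ hNm]
          refine lintegral_congr fun s => ?_
          rw [← lintegral_const_mul _ hNm]
  calc (∫⁻ x, (∫⁻ s, F s x ∂ν) ^ (2:ℝ) ∂μ) ^ ((1:ℝ)/2)
      ≤ ((∫⁻ s, N s ∂ν) ^ (2:ℝ)) ^ ((1:ℝ)/2) := ENNReal.rpow_le_rpow key (by norm_num)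
    _ = ∫⁻ s, N s ∂ν := by
        rw [← ENNReal.rpow_mul]; norm_num

lemma per_s {n : ℕ} {θ : (Fin n → ℝ) → ℝ} (hθm : Measurable θ)
    {G : (Fin n → ℝ) → ℝ≥0∞} (hGm : Measurable G) (Ω : Set (Fin n → ℝ))
    {q β : ℝ} (hq1 : 1 < q) (hβ0 : 0 < β) (hβh : β < 1/2)
    (hkey : 2*β + 2*(1-β)/q = 1)
    {s : ℝ} (hs0 : 0 < s) (hs1 : s < 1) :
    (∫⁻ x in Ω, (∫⁻ y, (‖θ (x + (1-s)⁻¹ • (y-x))‖₊ : ℝ≥0∞) * G y) ^ (2:ℝ)) ^ ((1:ℝ)/2)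
      ≤ (volume Ω * eLpNorm θ ⊤ volume) ^ β *
        (((ENNReal.ofReal ((1-s)^n) * ∫⁻ z, (‖θ z‖₊ : ℝ≥0∞)) ^ (q-1) *
          (ENNReal.ofReal (((1-s)/s)^n) * ∫⁻ z, (‖θ z‖₊ : ℝ≥0∞))) ^ ((1:ℝ)/q)) ^ (1-β) *
        (∫⁻ y, G y ^ (2:ℝ)) ^ ((1:ℝ)/2) := by
  have h1s : 0 < 1 - s := by linarith
  have hq0 : 0 < q := by linarith
  have hβ1 : β < 1 := by linarith
  have hβ1' : 0 < 1 - β := by linarith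
  set L : ℝ≥0∞ := ∫⁻ z, (‖θ z‖₊ : ℝ≥0∞) with hL
  set A : ℝ≥0∞ := eLpNorm θ ⊤ volume with hA
  set κ : (Fin n → ℝ) → (Fin n → ℝ) → ℝ≥0∞ :=
    fun x y => (‖θ (x + (1-s)⁻¹ • (y-x))‖₊ : ℝ≥0∞) with hκ
  set u : (Fin n → ℝ) → ℝ≥0∞ := fun y => G y ^ (2:ℝ) with hu
  set v : (Fin n → ℝ) → ℝ≥0∞ := fun y => G y ^ ((2:ℝ)/q) with hv
  set AA : ℝ≥0∞ := ENNReal.ofReal ((1-s)^n) * L with hAA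
  set BB : ℝ≥0∞ := ENNReal.ofReal (((1-s)/s)^n) * L with hBB
  -- measurability
  have hθE : Measurable fun z : Fin n → ℝ => (‖θ z‖₊ : ℝ≥0∞) := hθm.nnnorm.coe_nnreal_ennreal
  have hκm : Measurable fun p : (Fin n → ℝ) × (Fin n → ℝ) => κ p.1 p.2 := by
    have hmap : Measurable fun p : (Fin n → ℝ) × (Fin n → ℝ) =>
        p.1 + (1-s)⁻¹ • (p.2 - p.1) :=
      measurable_fst.add
        ((measurable_const_smul ((1-s)⁻¹)).comp (measurable_snd.sub measurable_fst))
    exact hθE.comp hmap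
  have hκx : ∀ x, Measurable fun y => κ x y := fun x => hκm.comp measurable_prodMk_left
  have hκy : ∀ y, Measurable fun x => κ x y := fun y => hκm.comp measurable_prodMk_right
  have hum : Measurable u := hGm.pow_const _
  have hvm : Measurable v := hGm.pow_const _
  -- affine identities
  have idy : ∀ x y : Fin n → ℝ,
      x + (1-s)⁻¹ • (y - x) = (1-s)⁻¹ • y + (x - (1-s)⁻¹ • x) := by
    intro x y; rw [smul_sub]; abel
  have idx : ∀ x y : Fin n → ℝ,
      x + (1-s)⁻¹ • (y - x) = (1 - (1-s)⁻¹) • x + (1-s)⁻¹ • y := by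
    intro x y; rw [sub_smul, one_smul, smul_sub]; abel
  have hαx : 1 - (1-s)⁻¹ ≠ 0 := by
    have h : (1:ℝ) < (1-s)⁻¹ := (one_lt_inv₀ h1s).2 (by linarith)
    intro hcon; rw [sub_eq_zero] at hcon; rw [← hcon] at h; exact lt_irrefl _ h
  -- change of variables in y
  have hAy : ∀ x, ∫⁻ y, κ x y = AA := by
    intro x
    calc ∫⁻ y, κ x y
        = ∫⁻ y, (‖θ ((1-s)⁻¹ • y + (x - (1-s)⁻¹ • x))‖₊ : ℝ≥0∞) := by
          refine lintegral_congr fun y => ?_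
          rw [hκ]; simp only; rw [idy]
      _ = ENNReal.ofReal |(((1-s)⁻¹) ^ n)⁻¹| * L :=
          lintegral_comp_affine (inv_ne_zero h1s.ne') _ hθE
      _ = AA := by
          rw [hAA]; congr 2; rw [← inv_pow, inv_inv]; exact abs_of_pos (pow_pos h1s n)
  -- change of variables in x
  have hBx : ∀ y, ∫⁻ x, κ x y = BB := by
    intro y
    calc ∫⁻ x, κ x y
        = ∫⁻ x, (‖θ ((1 - (1-s)⁻¹) • x + (1-s)⁻¹ • y)‖₊ : ℝ≥0∞) := by
          refine lintegral_congr fun x => ?_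
          rw [hκ]; simp only; rw [idx]
      _ = ENNReal.ofReal |((1 - (1-s)⁻¹) ^ n)⁻¹| * L :=
          lintegral_comp_affine hαx _ hθE
      _ = BB := by
          rw [hBB]; congr 2
          have heq : 1 - (1-s)⁻¹ = -(s/(1-s)) := by field_simp; ring
          rw [abs_inv, abs_pow, heq, abs_neg, abs_of_pos (div_pos hs0 h1s), ← inv_pow, inv_div]
  -- a.e. bound on Ω
  have hAe : ∀ y, ∀ᵐ x ∂(volume.restrict Ω), κ x y ≤ A := by
    intro y
    refine ae_restrict_of_ae ?_
    have hSm : MeasurableSet {z : Fin n → ℝ | ¬ (‖θ z‖₊ : ℝ≥0∞) ≤ A} :=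
      (measurableSet_le hθE measurable_const).compl
    have hS0 : volume {z : Fin n → ℝ | ¬ (‖θ z‖₊ : ℝ≥0∞) ≤ A} = 0 := by
      have h := ae_le_eLpNormEssSup (f := θ) (μ := volume)
      rw [hA, eLpNorm_exponent_top]
      exact ae_iff.mp h
    rw [ae_iff]
    refine measure_mono_null ?_ (affine_preimage_null hαx ((1-s)⁻¹ • y) hSm hS0)
    intro x hx
    simp only [Set.mem_setOf_eq, Set.mem_preimage] at hx ⊢
    rw [hκ] at hx; simp only at hx; rw [idx] at hx; exact hx
  -- splitting G
  have h2βnn : (0:ℝ) ≤ 2*β := by linarith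
  have h2qnn : (0:ℝ) ≤ (2/q)*(1-β) := mul_nonneg (by positivity) (by linarith)
  have hGuv : ∀ y, G y = u y ^ β * v y ^ (1-β) := by
    intro y
    have hexp : 2*β + (2/q)*(1-β) = 1 := by
      calc 2*β + (2/q)*(1-β) = 2*β + 2*(1-β)/q := by ring
        _ = 1 := hkey
    calc G y = G y ^ (1:ℝ) := (ENNReal.rpow_one _).symm
      _ = G y ^ (2*β + (2/q)*(1-β)) := by rw [hexp]
      _ = (G y ^ (2:ℝ)) ^ β * (G y ^ ((2:ℝ)/q)) ^ (1-β) := by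
          rw [ENNReal.rpow_add_of_nonneg _ _ h2βnn h2qnn, ENNReal.rpow_mul, ENNReal.rpow_mul]
  -- the sub-operators
  set J : ((Fin n → ℝ) → ℝ≥0∞) → (Fin n → ℝ) → ℝ≥0∞ :=
    fun h x => ∫⁻ y, κ x y * h y with hJ
  have hJum : Measurable (J u) :=
    Measurable.lintegral_prod_right'
      (f := fun p : (Fin n → ℝ) × (Fin n → ℝ) => κ p.1 p.2 * u p.2)
      (hκm.mul (hum.comp measurable_snd))
  have hJvm : Measurable (J v) :=
    Measurable.lintegral_prod_right'
      (f := fun p : (Fin n → ℝ) × (Fin n → ℝ) => κ p.1 p.2 * v p.2)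
      (hκm.mul (hvm.comp measurable_snd))
  -- (4a) pointwise interpolation
  have h4a : ∀ x, J G x ≤ (J u x) ^ β * (J v x) ^ (1-β) := by
    intro x
    have hpt : ∀ y, κ x y * G y = (κ x y * u y) ^ β * (κ x y * v y) ^ (1-β) := by
      intro y
      have hκsplit : κ x y = κ x y ^ β * κ x y ^ (1-β) := by
        rw [← ENNReal.rpow_add_of_nonneg _ _ hβ0.le hβ1'.le, add_sub_cancel, ENNReal.rpow_one]
      rw [ENNReal.mul_rpow_of_nonneg _ _ hβ0.le, ENNReal.mul_rpow_of_nonneg _ _ hβ1'.le]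
      calc κ x y * G y = (κ x y ^ β * κ x y ^ (1-β)) * (u y ^ β * v y ^ (1-β)) := by
            rw [← hκsplit, ← hGuv]
        _ = κ x y ^ β * u y ^ β * (κ x y ^ (1-β) * v y ^ (1-β)) := by ring
    calc J G x = ∫⁻ y, (κ x y * u y) ^ β * (κ x y * v y) ^ (1-β) := lintegral_congr hpt
      _ ≤ _ := hoelder_param volume hβ0 hβ1 ((hκx x).mul hum).aemeasurable
            ((hκx x).mul hvm).aemeasurable
  -- (4b) Hölder in x
  have hconj2 : (1/(2*β)).HolderConjugate (q/(2*(1-β))) := by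
    rw [Real.holderConjugate_iff]; constructor
    · rw [lt_div_iff₀ (by linarith)]; linarith
    · rw [one_div, inv_inv, inv_div]
      calc 2*β + 2*(1-β)/q = 2*β + 2*(1-β)/q := by ring
        _ = 1 := hkey
  have h4b : ∫⁻ x in Ω, (J G x) ^ (2:ℝ)
      ≤ (∫⁻ x in Ω, J u x) ^ (2*β) * (∫⁻ x in Ω, (J v x) ^ q) ^ (2*(1-β)/q) := by
    have hpt2 : ∀ x, (J G x) ^ (2:ℝ) ≤ (J u x) ^ (2*β) * (J v x) ^ (2*(1-β)) := by
      intro x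
      calc (J G x)^(2:ℝ) ≤ ((J u x)^β * (J v x)^(1-β))^(2:ℝ) :=
            ENNReal.rpow_le_rpow (h4a x) (by norm_num)
        _ = (J u x)^(2*β) * (J v x)^(2*(1-β)) := by
            rw [ENNReal.mul_rpow_of_nonneg _ _ (by norm_num : (0:ℝ) ≤ 2),
              ← ENNReal.rpow_mul, ← ENNReal.rpow_mul, mul_comm β 2, mul_comm (1-β) 2]
    have H := ENNReal.lintegral_mul_le_Lp_mul_Lq (volume.restrict Ω) hconj2
      (f := fun x => (J u x)^(2*β)) (g := fun x => (J v x)^(2*(1-β)))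
      ((hJum.pow_const _).aemeasurable) ((hJvm.pow_const _).aemeasurable)
    simp only [Pi.mul_apply] at H
    calc ∫⁻ x in Ω, (J G x)^(2:ℝ)
        ≤ ∫⁻ x in Ω, (J u x)^(2*β) * (J v x)^(2*(1-β)) := lintegral_mono hpt2
      _ ≤ (∫⁻ x in Ω, ((J u x)^(2*β))^(1/(2*β)))^(1/(1/(2*β))) *
          (∫⁻ x in Ω, ((J v x)^(2*(1-β)))^(q/(2*(1-β))))^(1/(q/(2*(1-β)))) := H
      _ = (∫⁻ x in Ω, J u x)^(2*β) * (∫⁻ x in Ω, (J v x)^q)^(2*(1-β)/q) := by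
          rw [one_div_one_div, one_div_div]
          congr 2
          · refine lintegral_congr fun x => ?_
            rw [← ENNReal.rpow_mul, mul_one_div, div_self (by linarith : 2*β ≠ 0),
              ENNReal.rpow_one]
          · refine lintegral_congr fun x => ?_
            rw [← ENNReal.rpow_mul]
            congr 1
            field_simp
  -- (4c) L¹ piece
  have h4c : ∫⁻ x in Ω, J u x ≤ volume Ω * A * (∫⁻ y, u y) := by
    have hswap : ∫⁻ x in Ω, J u x = ∫⁻ y, (∫⁻ x in Ω, κ x y) * u y := by
      rw [hJ]; simp only
      rw [lintegral_lintegral_swap ((hκm.mul (hum.comp measurable_snd)).aemeasurable)]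
      refine lintegral_congr fun y => ?_
      rw [lintegral_mul_const _ (hκy y)]
    rw [hswap]
    calc ∫⁻ y, (∫⁻ x in Ω, κ x y) * u y ≤ ∫⁻ y, (A * volume Ω) * u y := by
          refine lintegral_mono fun y => mul_le_mul_left ?_ _
          calc ∫⁻ x in Ω, κ x y ≤ ∫⁻ _ in Ω, A := lintegral_mono_ae (hAe y)
            _ = A * volume Ω := setLIntegral_const Ω A
      _ = volume Ω * A * (∫⁻ y, u y) := by
          rw [lintegral_const_mul _ hum, mul_comm A (volume Ω)]
  -- (4d) Lq piece
  have hconjq : (q/(q-1)).HolderConjugate q := by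
    rw [Real.holderConjugate_iff]; constructor
    · rw [lt_div_iff₀ (by linarith)]; linarith
    · rw [inv_div]; field_simp; ring
  have hRm : Measurable fun x => ∫⁻ y, κ x y * (v y)^q :=
    Measurable.lintegral_prod_right'
      (f := fun p : (Fin n → ℝ) × (Fin n → ℝ) => κ p.1 p.2 * (v p.2)^q)
      (hκm.mul ((hvm.comp measurable_snd).pow_const _))
  have h4di : ∀ x, J v x ≤ AA ^ ((q-1)/q) * (∫⁻ y, κ x y * (v y)^q) ^ ((1:ℝ)/q) := by
    intro x
    have H := ENNReal.lintegral_mul_le_Lp_mul_Lq volume hconjq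
      (f := fun y => κ x y ^ ((q-1)/q)) (g := fun y => κ x y ^ ((1:ℝ)/q) * v y)
      ((hκx x).pow_const _).aemeasurable (((hκx x).pow_const _).mul hvm).aemeasurable
    simp only [Pi.mul_apply] at H
    have hsum : (q-1)/q + 1/q = 1 := by field_simp; ring
    calc J v x = ∫⁻ y, (κ x y ^ ((q-1)/q)) * (κ x y ^ ((1:ℝ)/q) * v y) := by
          refine lintegral_congr fun y => ?_
          rw [← mul_assoc, ← ENNReal.rpow_add_of_nonneg _ _
            (div_nonneg (by linarith) hq0.le) (by positivity), hsum, ENNReal.rpow_one]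
      _ ≤ (∫⁻ y, (κ x y ^ ((q-1)/q))^(q/(q-1)))^(1/(q/(q-1))) *
          (∫⁻ y, (κ x y ^ ((1:ℝ)/q) * v y)^q)^(1/q) := H
      _ = AA ^ ((q-1)/q) * (∫⁻ y, κ x y * (v y)^q) ^ ((1:ℝ)/q) := by
          rw [one_div_div]
          congr 1
          · rw [← hAy x]
            congr 1
            refine lintegral_congr fun y => ?_
            rw [← ENNReal.rpow_mul, div_mul_div_comm, mul_comm (q-1) q, div_self
              ((mul_pos hq0 (by linarith : (0:ℝ) < q-1)).ne')]
            exact ENNReal.rpow_one _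
          · congr 1
            refine lintegral_congr fun y => ?_
            rw [ENNReal.mul_rpow_of_nonneg _ _ hq0.le, ← ENNReal.rpow_mul,
              one_div, inv_mul_cancel₀ hq0.ne', ENNReal.rpow_one]
  have h4d : ∫⁻ x in Ω, (J v x) ^ q ≤ AA ^ (q-1) * BB * (∫⁻ y, u y) := by
    have hvq : ∀ y, (v y)^q = u y := by
      intro y
      rw [hv, hu]; simp only
      rw [← ENNReal.rpow_mul, div_mul_cancel₀ _ hq0.ne']
    calc ∫⁻ x in Ω, (J v x)^q
        ≤ ∫⁻ x in Ω, AA^(q-1) * (∫⁻ y, κ x y * (v y)^q) := by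
          refine lintegral_mono fun x => ?_
          calc (J v x)^q
              ≤ (AA^((q-1)/q) * (∫⁻ y, κ x y * (v y)^q)^((1:ℝ)/q))^q :=
                ENNReal.rpow_le_rpow (h4di x) hq0.le
            _ = AA^(q-1) * (∫⁻ y, κ x y * (v y)^q) := by
                rw [ENNReal.mul_rpow_of_nonneg _ _ hq0.le, ← ENNReal.rpow_mul,
                  ← ENNReal.rpow_mul, div_mul_cancel₀ _ hq0.ne',
                  one_div, inv_mul_cancel₀ hq0.ne', ENNReal.rpow_one]
      _ = AA^(q-1) * ∫⁻ x in Ω, (∫⁻ y, κ x y * (v y)^q) := lintegral_const_mul _ hRm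
      _ ≤ AA^(q-1) * (BB * ∫⁻ y, u y) := by
          refine mul_le_mul_right ?_ _
          have hswap : ∫⁻ x in Ω, (∫⁻ y, κ x y * (v y)^q)
              = ∫⁻ y, (∫⁻ x in Ω, κ x y) * (v y)^q := by
            rw [lintegral_lintegral_swap
              ((hκm.mul ((hvm.comp measurable_snd).pow_const _)).aemeasurable)]
            refine lintegral_congr fun y => ?_
            rw [lintegral_mul_const _ (hκy y)]
          rw [hswap]
          calc ∫⁻ y, (∫⁻ x in Ω, κ x y) * (v y)^q ≤ ∫⁻ y, BB * (v y)^q := by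
                refine lintegral_mono fun y => mul_le_mul_left ?_ _
                rw [← hBx y]; exact setLIntegral_le_lintegral _ _
            _ = BB * ∫⁻ y, u y := by
                rw [lintegral_const_mul _ (hvm.pow_const _)]
                congr 1
                exact lintegral_congr hvq
      _ = AA^(q-1) * BB * (∫⁻ y, u y) := by rw [hBB]; ring
  -- combine everything
  have h2nn : (0:ℝ) ≤ 2*(1-β)/q := by positivity
  have hcomb : ∫⁻ x in Ω, (J G x)^(2:ℝ)
      ≤ (volume Ω * A)^(2*β) * (AA^(q-1) * BB)^(2*(1-β)/q) * (∫⁻ y, u y) := by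
    calc ∫⁻ x in Ω, (J G x)^(2:ℝ)
        ≤ (∫⁻ x in Ω, J u x)^(2*β) * (∫⁻ x in Ω, (J v x)^q)^(2*(1-β)/q) := h4b
      _ ≤ (volume Ω * A * (∫⁻ y, u y))^(2*β) *
          (AA^(q-1) * BB * (∫⁻ y, u y))^(2*(1-β)/q) :=
          mul_le_mul' (ENNReal.rpow_le_rpow h4c h2βnn) (ENNReal.rpow_le_rpow h4d h2nn)
      _ = (volume Ω * A)^(2*β) * (AA^(q-1) * BB)^(2*(1-β)/q) *
          ((∫⁻ y, u y)^(2*β) * (∫⁻ y, u y)^(2*(1-β)/q)) := by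
          rw [ENNReal.mul_rpow_of_nonneg _ _ h2βnn, ENNReal.mul_rpow_of_nonneg _ _ h2nn]
          ring
      _ = (volume Ω * A)^(2*β) * (AA^(q-1) * BB)^(2*(1-β)/q) * (∫⁻ y, u y) := by
          rw [← ENNReal.rpow_add_of_nonneg _ _ h2βnn h2nn, hkey, ENNReal.rpow_one]
  calc (∫⁻ x in Ω, (J G x)^(2:ℝ))^((1:ℝ)/2)
      ≤ ((volume Ω * A)^(2*β) * (AA^(q-1) * BB)^(2*(1-β)/q) * (∫⁻ y, u y))^((1:ℝ)/2) :=
        ENNReal.rpow_le_rpow hcomb (by norm_num)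
    _ = (volume Ω * A)^β * ((AA^(q-1) * BB)^((1:ℝ)/q))^(1-β) * (∫⁻ y, u y)^((1:ℝ)/2) := by
        rw [ENNReal.mul_rpow_of_nonneg _ _ (by norm_num : (0:ℝ) ≤ 1/2),
          ENNReal.mul_rpow_of_nonneg _ _ (by norm_num : (0:ℝ) ≤ 1/2),
          ← ENNReal.rpow_mul, ← ENNReal.rpow_mul, ← ENNReal.rpow_mul]
        congr 2
        · congr 1; ring
        · congr 1; ring

lemma aKq_eq {n k : ℕ} (hk1 : 1 ≤ k) {q : ℝ} (hq1 : 1 < q)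
    {s : ℝ} (hs0 : 0 < s) (hs1 : s < 1) (L : ℝ≥0∞) :
    ENNReal.ofReal (s ^ (k-1) / (1-s)^n) *
      (((ENNReal.ofReal ((1-s)^n) * L) ^ (q-1) *
        (ENNReal.ofReal (((1-s)/s)^n) * L)) ^ ((1:ℝ)/q))
    = ENNReal.ofReal (s ^ ((k:ℝ) - 1 - (n:ℝ)/q)) * L := by
  have ht : (0:ℝ) < 1 - s := by linarith
  have hq0 : (0:ℝ) < q := by linarith
  have hqm1 : (0:ℝ) ≤ q - 1 := by linarith
  set t : ℝ := 1 - s with htdef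
  -- step 1: fold the inner product into one ofReal times L^q
  have e1 : (ENNReal.ofReal (t^n) * L) ^ (q-1) * (ENNReal.ofReal ((t/s)^n) * L)
      = ENNReal.ofReal ((t^n)^(q-1) * (t/s)^n) * L ^ q := by
    rw [ENNReal.mul_rpow_of_nonneg _ _ hqm1,
      ENNReal.ofReal_rpow_of_nonneg (by positivity) hqm1]
    calc ENNReal.ofReal ((t^n)^(q-1)) * L^(q-1) * (ENNReal.ofReal ((t/s)^n) * L)
        = (ENNReal.ofReal ((t^n)^(q-1)) * ENNReal.ofReal ((t/s)^n)) * (L^(q-1) * L^(1:ℝ)) := by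
          rw [ENNReal.rpow_one]; ring
      _ = ENNReal.ofReal ((t^n)^(q-1) * (t/s)^n) * L ^ q := by
          rw [← ENNReal.ofReal_mul (by positivity),
            ← ENNReal.rpow_add_of_nonneg _ _ hqm1 (by norm_num)]
          congr 2
          ring
  rw [e1]
  -- step 2: take the (1/q)-power
  have e2 : (ENNReal.ofReal ((t^n)^(q-1) * (t/s)^n) * L ^ q) ^ ((1:ℝ)/q)
      = ENNReal.ofReal (((t^n)^(q-1) * (t/s)^n) ^ ((1:ℝ)/q)) * L := by
    rw [ENNReal.mul_rpow_of_nonneg _ _ (by positivity),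
      ENNReal.ofReal_rpow_of_nonneg (by positivity) (by positivity),
      ← ENNReal.rpow_mul, mul_one_div, div_self hq0.ne', ENNReal.rpow_one]
  rw [e2, ← mul_assoc, ← ENNReal.ofReal_mul (by positivity)]
  congr 1
  -- real computation
  have h1 : ((t^n : ℝ))^(q-1) = t ^ ((n:ℝ)*(q-1)) := by
    rw [← Real.rpow_natCast t n, ← Real.rpow_mul ht.le]
  have h2 : ((t/s)^n : ℝ) = t^((n:ℝ)) / s^((n:ℝ)) := by
    rw [div_pow, Real.rpow_natCast, Real.rpow_natCast]
  have h3 : ((t^n:ℝ))^(q-1) * ((t/s)^n) = t ^ ((n:ℝ)*q) / s^((n:ℝ)) := by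
    rw [h1, h2, div_eq_mul_inv, ← mul_assoc, ← Real.rpow_add ht, ← div_eq_mul_inv]
    congr 2
    ring
  have h4 : (t^((n:ℝ)*q)/s^((n:ℝ)))^((1:ℝ)/q) = t^((n:ℝ)) / s^((n:ℝ)/q) := by
    rw [Real.div_rpow (Real.rpow_nonneg ht.le _) (Real.rpow_nonneg hs0.le _),
      ← Real.rpow_mul ht.le, ← Real.rpow_mul hs0.le]
    congr 2
    · field_simp
    · ring
  rw [h3, h4]
  have h5 : (s:ℝ) ^ (k-1) = s ^ ((k:ℝ) - 1) := by
    rw [← Real.rpow_natCast s (k-1), Nat.cast_sub hk1, Nat.cast_one]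
  have h6 : ((1:ℝ) - s)^n = t^((n:ℝ)) := by
    rw [← htdef, ← Real.rpow_natCast t n]
  rw [h5, h6]
  have hY : s^((k:ℝ)-1-(n:ℝ)/q) = s^((k:ℝ)-1) / s^((n:ℝ)/q) := Real.rpow_sub hs0 _ _
  rw [hY]
  have ht0 : t^((n:ℝ)) ≠ 0 := (Real.rpow_pos_of_pos ht _).ne'
  have hsq0 : s^((n:ℝ)/q) ≠ 0 := (Real.rpow_pos_of_pos hs0 _).ne'
  field_simp

lemma int_a_bound {n k : ℕ} (hk1 : 1 ≤ k) :
    ∫⁻ s in Ioo (0:ℝ) (1/2), ENNReal.ofReal (s ^ (k-1) / (1-s)^n)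
      ≤ ENNReal.ofReal ((2:ℝ) ^ ((n:ℝ) - (k:ℝ)) / (k:ℝ)) := by
  have hk0 : (0:ℝ) < k := by exact_mod_cast hk1
  have step1 : ∫⁻ s in Ioo (0:ℝ) (1/2), ENNReal.ofReal (s ^ (k-1) / (1-s)^n)
      ≤ ∫⁻ s in Ioo (0:ℝ) (1/2), ENNReal.ofReal (2^n * s ^ (k-1)) := by
    refine lintegral_mono_ae ((ae_restrict_iff' measurableSet_Ioo).2
      (ae_of_all _ fun s hs => ?_))
    refine ENNReal.ofReal_le_ofReal ?_
    obtain ⟨hs0, hs12⟩ := hs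
    have h1s : (0:ℝ) < 1 - s := by linarith
    rw [div_le_iff₀ (pow_pos h1s n)]
    have h21 : (1:ℝ) ≤ 2^n * (1-s)^n := by
      calc (1:ℝ) = (2 * (1/2))^n := by norm_num
        _ = 2^n * (1/2)^n := by rw [mul_pow]
        _ ≤ 2^n * (1-s)^n := by
            refine mul_le_mul_of_nonneg_left
              (pow_le_pow_left₀ (by norm_num) (by linarith) n) (by positivity)
    have hsk : (0:ℝ) ≤ s^(k-1) := pow_nonneg hs0.le _
    nlinarith
  refine step1.trans ?_
  rw [← ofReal_integral_eq_lintegral_ofReal ?int ?pos]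
  case int =>
    exact ((continuous_const.mul (continuous_pow _)).integrableOn_Icc).mono_set
      Ioo_subset_Icc_self
  case pos =>
    exact (ae_restrict_iff' measurableSet_Ioo).2
      (ae_of_all _ fun s hs => mul_nonneg (by positivity) (pow_nonneg hs.1.le _))
  refine ENNReal.ofReal_le_ofReal ?_
  have hval : ∫ s in Ioo (0:ℝ) (1/2), 2^n * s^(k-1) = 2^n * ((1/2:ℝ)^k / k) := by
    rw [← integral_Ioc_eq_integral_Ioo,
      ← intervalIntegral.integral_of_le (by norm_num : (0:ℝ) ≤ 1/2)]
    rw [intervalIntegral.integral_const_mul, integral_pow]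
    have hkk : k - 1 + 1 = k := Nat.succ_pred_eq_of_pos hk1
    rw [hkk]
    have hcast : ((k-1 : ℕ):ℝ) + 1 = (k:ℝ) := by
      rw [Nat.cast_sub hk1]; push_cast; ring
    rw [hcast, zero_pow (by omega : k ≠ 0)]
    ring
  rw [hval]
  have h2 : (2:ℝ)^((n:ℝ) - (k:ℝ)) = 2^n * (1/2:ℝ)^k := by
    rw [Real.rpow_sub (by norm_num), Real.rpow_natCast, Real.rpow_natCast]
    rw [div_eq_mul_inv, one_div, inv_pow]
  rw [h2, mul_div_assoc]

lemma int_D_eval {r : ℝ} (hr : -1 < r) :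
    ∫⁻ s in Ioo (0:ℝ) (1/2), ENNReal.ofReal (s ^ r)
      = ENNReal.ofReal ((2:ℝ)^(-(r+1)) / (r+1)) := by
  have hr1 : 0 < r + 1 := by linarith
  have hint : IntegrableOn (fun s : ℝ => s ^ r) (Ioo (0:ℝ) (1/2)) := by
    have h := intervalIntegral.intervalIntegrable_rpow' (a := (0:ℝ)) (b := 1/2) hr
    rw [intervalIntegrable_iff_integrableOn_Ioc_of_le (by norm_num)] at h
    exact h.mono_set Ioo_subset_Ioc_self
  rw [← ofReal_integral_eq_lintegral_ofReal hint
    ((ae_restrict_iff' measurableSet_Ioo).2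
      (ae_of_all _ fun s hs => Real.rpow_nonneg hs.1.le r))]
  congr 1
  rw [← integral_Ioc_eq_integral_Ioo,
    ← intervalIntegral.integral_of_le (by norm_num : (0:ℝ) ≤ 1/2)]
  rw [integral_rpow (Or.inl hr), Real.zero_rpow hr1.ne']
  rw [show ((1:ℝ)/2) = 2⁻¹ by norm_num,
    Real.inv_rpow (by norm_num) (r+1), ← Real.rpow_neg (by norm_num)]
  rw [sub_zero]

/-- for `k ≤ n/2` and any `q > n/k`, with `β = (q-2)/(2(q-1))`,
`‖P_θ^{k,L} f‖_{L²(Ω)} ≤ ((2^{n-k}/k)|Ω|‖θ‖_∞)^β ((2^{n/q-k}/(k-n/q))‖θ‖_{L¹})^{1-β} ‖f‖_{L²(Ω)}`. -/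
theorem stmt6 {n : ℕ} (k : ℕ) (hk1 : 1 ≤ k) (hkn : (k : ℝ) ≤ (n : ℝ) / 2)
    (q : ℝ) (hq : (n : ℝ) / k < q)
    (Ω : Set (Fin n → ℝ)) (hΩb : IsBounded Ω) (hΩm : MeasurableSet Ω)
    (c : Fin n → ℝ) (r : ℝ) (hr : 0 < r) (hBΩ : Metric.ball c r ⊆ Ω)
    (hstar : StarShapedWRT Ω (Metric.ball c r))
    (θ : (Fin n → ℝ) → ℝ) (hθ : ContDiff ℝ (⊤ : ℕ∞) θ) (hθsupp : tsupport θ ⊆ Metric.ball c r)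
    (f : (Fin n → ℝ) → ℝ) (hf : MemLp f 2 volume)
    (hfsupp : Function.support f ⊆ closure Ω) :
    eLpNorm (PthetaL k θ f) 2 (volume.restrict Ω)
      ≤ (ENNReal.ofReal ((2 : ℝ) ^ ((n : ℝ) - k) / k) * volume Ω *
            eLpNorm θ ⊤ volume) ^ ((q - 2) / (2 * (q - 1))) *
          (ENNReal.ofReal
              ((2 : ℝ) ^ ((n : ℝ) / q - k) / ((k : ℝ) - (n : ℝ) / q)) *
            ∫⁻ x, (‖θ x‖₊ : ℝ≥0∞)) ^ (1 - (q - 2) / (2 * (q - 1))) *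
          eLpNorm f 2 (volume.restrict Ω) := by
  classical
  -- basic scalar facts
  have hk0 : (0:ℝ) < k := by exact_mod_cast hk1
  have hq2 : 2 < q := lt_of_le_of_lt (by rw [le_div_iff₀ hk0]; linarith) hq
  have hq0 : 0 < q := by linarith
  have hq1 : 1 < q := by linarith
  have hnq : (n : ℝ)/q < k := by
    rw [div_lt_iff₀ hq0]
    have h := (div_lt_iff₀ hk0).mp hq
    linarith
  set β := (q-2)/(2*(q-1)) with hβdef
  have hβ0 : 0 < β := div_pos (by linarith) (by linarith)
  have hβh : β < 1/2 := by
    rw [hβdef, div_lt_div_iff₀ (by linarith) (by norm_num)]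
    linarith
  have hβ1 : β < 1 := by linarith
  have hβ1' : (0:ℝ) ≤ 1 - β := by linarith
  have hkey : 2*β + 2*(1-β)/q = 1 := by
    have hq1ne : q - 1 ≠ 0 := by intro h; rw [sub_eq_zero] at h; rw [← h] at hq1; linarith
    rw [hβdef]; field_simp; ring
  -- measurable representative of f
  have hfa : AEStronglyMeasurable f volume := hf.1
  set f' : (Fin n → ℝ) → ℝ := hfa.mk f with hf'def
  have hsm : StronglyMeasurable f' := hfa.stronglyMeasurable_mk
  have hff' : f =ᵐ[volume] f' := hfa.ae_eq_mk
  have hPeq : PthetaL k θ f = PthetaL k θ f' := by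
    funext x
    have hinner : ∀ s : ℝ, (∫ y, θ (x + (1-s)⁻¹ • (y-x)) * f y)
        = ∫ y, θ (x + (1-s)⁻¹ • (y-x)) * f' y := fun s =>
      integral_congr_ae (hff'.mono fun y hy =>
        congrArg (fun t => θ (x + (1-s)⁻¹ • (y-x)) * t) hy)
    unfold PthetaL
    refine integral_congr_ae (ae_of_all _ fun s => ?_)
    show s ^ (k-1)/(1-s)^n * (∫ y, θ (x + (1-s)⁻¹ • (y-x)) * f y)
        = s ^ (k-1)/(1-s)^n * (∫ y, θ (x + (1-s)⁻¹ • (y-x)) * f' y)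
    rw [hinner s]
  have hfeq : eLpNorm f 2 (volume.restrict Ω) = eLpNorm f' 2 (volume.restrict Ω) :=
    eLpNorm_congr_ae (ae_restrict_of_ae hff')
  rw [hPeq, hfeq]
  have hθm : Measurable θ := hθ.continuous.measurable
  set G : (Fin n → ℝ) → ℝ≥0∞ := Ω.indicator (fun y => (‖f' y‖₊ : ℝ≥0∞)) with hGdef
  have hGm : Measurable G := (hsm.measurable.nnnorm.coe_nnreal_ennreal).indicator hΩm
  set L : ℝ≥0∞ := ∫⁻ x, (‖θ x‖₊ : ℝ≥0∞) with hLdef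
  set A : ℝ≥0∞ := eLpNorm θ ⊤ volume with hAdef
  set a : ℝ → ℝ≥0∞ := fun s => ENNReal.ofReal (s ^ (k-1) / (1-s)^n) with hadef
  have ham : Measurable a :=
    ((measurable_id'.pow_const (k-1)).div
      ((measurable_const.sub measurable_id').pow_const n)).ennreal_ofReal
  set I : ℝ → (Fin n → ℝ) → ℝ≥0∞ :=
    fun s x => ∫⁻ y, (‖θ (x + (1-s)⁻¹ • (y-x))‖₊ : ℝ≥0∞) * G y with hIdef
  -- measurability of the kernel
  have hκfull : Measurable fun p : ℝ × ((Fin n → ℝ) × (Fin n → ℝ)) =>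
      (‖θ (p.2.1 + (1-p.1)⁻¹ • (p.2.2 - p.2.1))‖₊ : ℝ≥0∞) := by
    have hmap : Measurable fun p : ℝ × ((Fin n → ℝ) × (Fin n → ℝ)) =>
        p.2.1 + (1-p.1)⁻¹ • (p.2.2 - p.2.1) := by
      refine measurable_pi_lambda _ fun i => ?_
      have h1 : Measurable fun p : ℝ × ((Fin n → ℝ) × (Fin n → ℝ)) => p.2.1 i :=
        (measurable_pi_apply i).comp (measurable_snd.fst)
      have h2 : Measurable fun p : ℝ × ((Fin n → ℝ) × (Fin n → ℝ)) => p.2.2 i :=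
        (measurable_pi_apply i).comp (measurable_snd.snd)
      have hc : Measurable fun p : ℝ × ((Fin n → ℝ) × (Fin n → ℝ)) => (1-p.1)⁻¹ :=
        (measurable_const.sub measurable_fst).inv
      show Measurable fun p : ℝ × ((Fin n → ℝ) × (Fin n → ℝ)) =>
        p.2.1 i + (1-p.1)⁻¹ * (p.2.2 i - p.2.1 i)
      exact h1.add (hc.mul (h2.sub h1))
    exact (hθm.comp hmap).nnnorm.coe_nnreal_ennreal
  have hIm : Measurable fun p : ℝ × (Fin n → ℝ) => I p.1 p.2 := by
    apply Measurable.lintegral_prod_right'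
      (f := fun p : (ℝ × (Fin n → ℝ)) × (Fin n → ℝ) =>
        (‖θ (p.1.2 + (1-p.1.1)⁻¹ • (p.2 - p.1.2))‖₊ : ℝ≥0∞) * G p.2)
    exact (hκfull.comp ((measurable_fst.fst).prodMk
      ((measurable_fst.snd).prodMk measurable_snd))).mul (hGm.comp measurable_snd)
  -- pointwise domination of the operator
  have step2 : ∀ x ∈ Ω, (‖PthetaL k θ f' x‖₊ : ℝ≥0∞)
      ≤ ∫⁻ s in Ioo (0:ℝ) (1/2), a s * I s x := by
    intro x hx
    refine le_trans (enorm_integral_le_lintegral_enorm _) ?_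
    refine lintegral_mono_ae ((ae_restrict_iff' measurableSet_Ioo).2
      (ae_of_all _ fun s hs => ?_))
    obtain ⟨hs0, hs12⟩ := hs
    have hc : 0 ≤ s ^ (k-1) / (1-s)^n :=
      div_nonneg (pow_nonneg hs0.le _) (pow_nonneg (by linarith) _)
    calc (‖(s^(k-1)/(1-s)^n) * ∫ y, θ (x + (1-s)⁻¹ • (y-x)) * f' y‖₊ : ℝ≥0∞)
        = ENNReal.ofReal (s^(k-1)/(1-s)^n) *
            (‖∫ y, θ (x + (1-s)⁻¹ • (y-x)) * f' y‖₊ : ℝ≥0∞) := by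
          rw [nnnorm_mul, ENNReal.coe_mul, ← enorm_eq_nnnorm, Real.enorm_eq_ofReal hc]
      _ ≤ a s * ∫⁻ y, (‖θ (x + (1-s)⁻¹ • (y-x))‖₊ : ℝ≥0∞) * (‖f' y‖₊ : ℝ≥0∞) := by
          refine mul_le_mul_right ?_ _
          refine le_trans (enorm_integral_le_lintegral_enorm _) ?_
          refine le_of_eq (lintegral_congr fun y => ?_)
          rw [enorm_eq_nnnorm, nnnorm_mul, ENNReal.coe_mul]
      _ = a s * I s x := by
          congr 1
          refine lintegral_congr fun y => ?_
          by_cases hy : y ∈ Ω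
          · rw [hGdef]; rw [Set.indicator_of_mem hy]
          · have hθz : θ (x + (1-s)⁻¹ • (y-x)) = 0 := by
              by_contra hne
              set z : Fin n → ℝ := x + (1-s)⁻¹ • (y-x) with hzdef
              have hz : z ∈ Metric.ball c r :=
                hθsupp (subset_tsupport θ (Function.mem_support.mpr hne))
              have hzx : z - x = (1-s)⁻¹ • (y - x) := by rw [hzdef]; abel
              have h1 : (1-s) • (z - x) = y - x := by
                rw [hzx, smul_smul, mul_inv_cancel₀ (by linarith : (1:ℝ)-s ≠ 0), one_smul]
              have hyz : (1-s) • z + s • x = y := by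
                have h2 : (1-s) • z - (1-s) • x = y - x := by rw [← smul_sub]; exact h1
                have h3 : (1-s) • z + s • x
                    = ((1-s) • z - (1-s) • x) + ((1-s) • x + s • x) := by abel
                rw [h3, h2, ← add_smul]
                have h4 : (1-s) + s = 1 := by ring
                rw [h4, one_smul]
                abel
              have hseg : y ∈ segment ℝ z x :=
                ⟨1-s, s, by linarith, hs0.le, by ring, hyz⟩
              have hyΩ : y ∈ Ω := by
                have hsub : Metric.ball c r ∪ {x} ⊆ convexHull ℝ (Metric.ball c r ∪ {x}) :=
                  subset_convexHull ℝ _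
                have hzin : z ∈ convexHull ℝ (Metric.ball c r ∪ {x}) :=
                  hsub (Set.mem_union_left _ hz)
                have hxin : x ∈ convexHull ℝ (Metric.ball c r ∪ {x}) :=
                  hsub (Set.mem_union_right _ rfl)
                exact hstar x hx
                  ((convex_convexHull ℝ _).segment_subset hzin hxin hseg)
              exact hy hyΩ
            rw [hGdef, Set.indicator_of_notMem hy, hθz]
            simp
  -- Minkowski's inequality in `s`
  have hFm : Measurable (Function.uncurry fun s x => a s * I s x) :=
    (ham.comp measurable_fst).mul hIm
  have hstep3 : (∫⁻ x in Ω, (∫⁻ s in Ioo (0:ℝ) (1/2), a s * I s x) ^ (2:ℝ)) ^ ((1:ℝ)/2)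
      ≤ ∫⁻ s in Ioo (0:ℝ) (1/2), a s * (∫⁻ x in Ω, (I s x) ^ (2:ℝ)) ^ ((1:ℝ)/2) := by
    refine le_trans
      (minkowski_two (volume.restrict Ω) (volume.restrict (Ioo (0:ℝ) (1/2))) hFm) ?_
    refine lintegral_mono fun s => ?_
    have hIsm : Measurable fun x => I s x := hIm.comp measurable_prodMk_left
    calc (∫⁻ x in Ω, (a s * I s x)^(2:ℝ))^((1:ℝ)/2)
        = ((a s)^(2:ℝ) * ∫⁻ x in Ω, (I s x)^(2:ℝ))^((1:ℝ)/2) := by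
          congr 1
          rw [← lintegral_const_mul _ (hIsm.pow_const _)]
          refine lintegral_congr fun x => ?_
          rw [ENNReal.mul_rpow_of_nonneg _ _ (by norm_num : (0:ℝ) ≤ 2)]
      _ = a s * (∫⁻ x in Ω, (I s x)^(2:ℝ))^((1:ℝ)/2) := by
          rw [ENNReal.mul_rpow_of_nonneg _ _ (by norm_num : (0:ℝ) ≤ 1/2),
            ← ENNReal.rpow_mul]
          norm_num
      _ ≤ a s * (∫⁻ x in Ω, (I s x)^(2:ℝ))^((1:ℝ)/2) := le_rfl
  set U : ℝ≥0∞ := (∫⁻ y, G y ^ (2:ℝ)) ^ ((1:ℝ)/2) with hUdef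
  -- per-s estimate
  have hper : ∀ s ∈ Ioo (0:ℝ) (1/2),
      a s * (∫⁻ x in Ω, (I s x) ^ (2:ℝ)) ^ ((1:ℝ)/2)
        ≤ ((a s * (volume Ω * A)) ^ β *
            (ENNReal.ofReal (s ^ ((k:ℝ)-1-(n:ℝ)/q)) * L) ^ (1-β)) * U := by
    intro s hs
    obtain ⟨hs0, hs12⟩ := hs
    have hs1 : s < 1 := by linarith
    have hKq := aKq_eq (n := n) hk1 hq1 hs0 hs1 L
    have hsplit : a s = (a s)^β * (a s)^(1-β) := by
      rw [← ENNReal.rpow_add_of_nonneg _ _ hβ0.le hβ1', add_sub_cancel, ENNReal.rpow_one]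
    calc a s * (∫⁻ x in Ω, (I s x)^(2:ℝ))^((1:ℝ)/2)
        ≤ a s * ((volume Ω * A)^β *
            (((ENNReal.ofReal ((1-s)^n) * L)^(q-1) *
              (ENNReal.ofReal (((1-s)/s)^n) * L))^((1:ℝ)/q))^(1-β) * U) :=
          mul_le_mul_right (per_s hθm hGm Ω hq1 hβ0 hβh hkey hs0 hs1) _
      _ = ((a s * (volume Ω * A))^β *
            (a s * (((ENNReal.ofReal ((1-s)^n) * L)^(q-1) *
              (ENNReal.ofReal (((1-s)/s)^n) * L))^((1:ℝ)/q)))^(1-β)) * U := by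
          have hmid : ∀ (aa M K V : ℝ≥0∞),
              aa * (M^β * K^(1-β) * V) = (aa*M)^β * (aa*K)^(1-β) * V := by
            intro aa M K V
            rw [ENNReal.mul_rpow_of_nonneg aa M hβ0.le,
              ENNReal.mul_rpow_of_nonneg aa K hβ1']
            have haa : aa = aa^β * aa^(1-β) := by
              rw [← ENNReal.rpow_add_of_nonneg _ _ hβ0.le hβ1', add_sub_cancel,
                ENNReal.rpow_one]
            conv_lhs => rw [haa]
            ring
          exact hmid _ _ _ _
      _ = ((a s * (volume Ω * A)) ^ β *
            (ENNReal.ofReal (s ^ ((k:ℝ)-1-(n:ℝ)/q)) * L) ^ (1-β)) * U := by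
          simp only [hadef]
          rw [hKq]
  -- Hölder in s and evaluation of the resulting integrals
  have hm1 : Measurable fun s => a s * (volume Ω * A) := ham.mul_const _
  have hm2 : Measurable fun s : ℝ => ENNReal.ofReal (s ^ ((k:ℝ)-1-(n:ℝ)/q)) * L :=
    ((measurable_id'.pow_const _).ennreal_ofReal).mul_const _
  have step5 : ∫⁻ s in Ioo (0:ℝ) (1/2),
        ((a s * (volume Ω * A))^β *
          (ENNReal.ofReal (s ^ ((k:ℝ)-1-(n:ℝ)/q)) * L)^(1-β)) * U
      ≤ ((∫⁻ s in Ioo (0:ℝ) (1/2), a s * (volume Ω * A))^β *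
          (∫⁻ s in Ioo (0:ℝ) (1/2),
            ENNReal.ofReal (s ^ ((k:ℝ)-1-(n:ℝ)/q)) * L)^(1-β)) * U := by
    rw [lintegral_mul_const _ (f := fun s => (a s * (volume Ω * A))^β *
      (ENNReal.ofReal (s ^ ((k:ℝ)-1-(n:ℝ)/q)) * L)^(1-β)) ((hm1.pow_const _).mul (hm2.pow_const _))]
    exact mul_le_mul_left
      (hoelder_param _ hβ0 hβ1 hm1.aemeasurable hm2.aemeasurable) U
  have hIa : ∫⁻ s in Ioo (0:ℝ) (1/2), a s * (volume Ω * A)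
      ≤ ENNReal.ofReal ((2:ℝ)^((n:ℝ)-(k:ℝ))/(k:ℝ)) * volume Ω * A := by
    rw [lintegral_mul_const _ ham, mul_assoc]
    exact mul_le_mul_left (int_a_bound hk1) _
  have hID : ∫⁻ s in Ioo (0:ℝ) (1/2), ENNReal.ofReal (s ^ ((k:ℝ)-1-(n:ℝ)/q)) * L
      = ENNReal.ofReal ((2:ℝ)^((n:ℝ)/q - (k:ℝ))/((k:ℝ) - (n:ℝ)/q)) * L := by
    rw [lintegral_mul_const _ ((measurable_id'.pow_const _).ennreal_ofReal)]
    congr 1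
    rw [int_D_eval (by linarith : (-1:ℝ) < (k:ℝ)-1-(n:ℝ)/q)]
    congr 2
    · ring
    · ring
  -- the L² norm of f' over Ω
  have hU : U = eLpNorm f' 2 (volume.restrict Ω) := by
    rw [hUdef, eLpNorm_eq_lintegral_rpow_enorm_toReal (by norm_num) (by norm_num)]
    have h2 : (2:ℝ≥0∞).toReal = 2 := by norm_num
    rw [h2]
    congr 1
    rw [← lintegral_indicator hΩm]
    refine lintegral_congr fun y => ?_
    rw [hGdef]
    by_cases hy : y ∈ Ω
    · rw [Set.indicator_of_mem hy, Set.indicator_of_mem hy, enorm_eq_nnnorm]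
    · rw [Set.indicator_of_notMem hy, Set.indicator_of_notMem hy,
        ENNReal.zero_rpow_of_pos (by norm_num)]
  -- final assembly
  calc eLpNorm (PthetaL k θ f') 2 (volume.restrict Ω)
      = (∫⁻ x in Ω, (‖PthetaL k θ f' x‖₊ : ℝ≥0∞) ^ (2:ℝ)) ^ ((1:ℝ)/2) := by
        rw [eLpNorm_eq_lintegral_rpow_enorm_toReal (by norm_num) (by norm_num)]
        norm_num
        simp only [enorm_eq_nnnorm]
    _ ≤ (∫⁻ x in Ω, (∫⁻ s in Ioo (0:ℝ) (1/2), a s * I s x) ^ (2:ℝ)) ^ ((1:ℝ)/2) := by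
        refine ENNReal.rpow_le_rpow ?_ (by norm_num)
        refine lintegral_mono_ae ((ae_restrict_iff' hΩm).2
          (ae_of_all _ fun x hx => ?_))
        exact ENNReal.rpow_le_rpow (step2 x hx) (by norm_num)
    _ ≤ ∫⁻ s in Ioo (0:ℝ) (1/2), a s * (∫⁻ x in Ω, (I s x) ^ (2:ℝ)) ^ ((1:ℝ)/2) := hstep3
    _ ≤ ∫⁻ s in Ioo (0:ℝ) (1/2),
          ((a s * (volume Ω * A))^β *
            (ENNReal.ofReal (s ^ ((k:ℝ)-1-(n:ℝ)/q)) * L)^(1-β)) * U :=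
        lintegral_mono_ae ((ae_restrict_iff' measurableSet_Ioo).2 (ae_of_all _ hper))
    _ ≤ ((∫⁻ s in Ioo (0:ℝ) (1/2), a s * (volume Ω * A))^β *
          (∫⁻ s in Ioo (0:ℝ) (1/2),
            ENNReal.ofReal (s ^ ((k:ℝ)-1-(n:ℝ)/q)) * L)^(1-β)) * U := step5
    _ ≤ ((ENNReal.ofReal ((2:ℝ)^((n:ℝ)-(k:ℝ))/(k:ℝ)) * volume Ω * A)^β *
          (ENNReal.ofReal ((2:ℝ)^((n:ℝ)/q - (k:ℝ))/((k:ℝ) - (n:ℝ)/q)) * L)^(1-β)) * U := by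
        refine mul_le_mul_left (mul_le_mul'
          (ENNReal.rpow_le_rpow hIa hβ0.le)
          (ENNReal.rpow_le_rpow (le_of_eq hID) hβ1')) U
    _ = (ENNReal.ofReal ((2:ℝ)^((n:ℝ)-(k:ℝ))/(k:ℝ)) * volume Ω * A)^β *
          (ENNReal.ofReal ((2:ℝ)^((n:ℝ)/q - (k:ℝ))/((k:ℝ) - (n:ℝ)/q)) * L)^(1-β) *
          eLpNorm f' 2 (volume.restrict Ω) := by
        rw [hU]
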